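/- Let S ⊆ H with |S| > 1 and h_0 ∈ S with π_S(h_0) > 1/2, and let R = S \ {h_0}. Then for every question q_i, the shrinkage satisfies δ_i · π_S(R) ≤ Δ_i(S, π_S) ≤ 2 · δ_i · π_S(R). -/

import Mathlib

open Finset

namespace ActiveLearning

variable {H A : Type*} {m : ℕ}

/-- The total mass of a weight function `v` on a finite set `S`. -/
def mass (v : H → ℝ) (S : Finset H) : ℝ := ∑ s ∈ S, v s

/-- `v` restricted to `S` and normalized. -/
noncomputable def restrict [DecidableEq H] (v : H → ℝ) (S : Finset H) : H → ℝ :=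
  fun h => if h ∈ S then v h / mass v S else 0

/-- The shrinkage `Δ` of a question `qi` on `(S, v)`. -/
noncomputable def shrink [Fintype A] [DecidableEq A] (qi : H → A)
    (S : Finset H) (v : H → ℝ) : ℝ :=
  mass v S - ∑ j : A, (mass v (S.filter fun s => qi s = j)) ^ 2 / mass v S

/-- The collision probability of a distribution `v`. -/
def CP [Fintype H] (v : H → ℝ) : ℝ := ∑ z : H, (v z) ^ 2

/-- Query trees: internal nodes are questions (indexed by `Fin m`), branches are answers,
leaves are hypotheses. -/
inductive QTree (m : ℕ) (H A : Type*) : Type _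
  | leaf : H → QTree m H A
  | node : Fin m → (A → QTree m H A) → QTree m H A

/-- Follow the answers of hypothesis `h` down the tree, returning the leaf reached. -/
def follow (q : Fin m → H → A) : QTree m H A → H → H
  | .leaf h', _ => h'
  | .node i ch, h => follow q (ch (q i h)) h

/-- The cost `c_T(h)`: sum of costs of the questions on the root-to-`h` path. -/
def pathCost (q : Fin m → H → A) (c : Fin m → ℝ) : QTree m H A → H → ℝ
  | .leaf _, _ => 0
  | .node i ch, h => c i + pathCost q c (ch (q i h)) h

/-- The leaves of `T` include `S`: every `h ∈ S` is identified by `T`. -/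
def ValidOn (q : Fin m → H → A) (T : QTree m H A) (S : Finset H) : Prop :=
  ∀ h ∈ S, follow q T h = h

/-- The expected cost `C(T, v)` of a query tree `T` under weights `v`. -/
noncomputable def treeCost [Fintype H] (q : Fin m → H → A) (c : Fin m → ℝ)
    (T : QTree m H A) (v : H → ℝ) : ℝ :=
  ∑ h : H, v h * pathCost q c T h

/-- The questions asked along the root-to-`h` path. -/
def pathQs (q : Fin m → H → A) : QTree m H A → H → List (Fin m)
  | .leaf _, _ => []
  | .node i ch, h => i :: pathQs q (ch (q i h)) h

/-- `T` is a greedy query tree for `π` on version space `S`: at every node it asks a question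
maximizing the shrinkage-cost ratio and recurses on each nonempty answer class. -/
inductive IsGreedy [Fintype A] [DecidableEq A] [DecidableEq H]
    (q : Fin m → H → A) (c : Fin m → ℝ) (π : H → ℝ) :
    QTree m H A → Finset H → Prop
  | leaf (h : H) : IsGreedy q c π (.leaf h) {h}
  | node (S : Finset H) (i : Fin m) (ch : A → QTree m H A)
      (hcard : 1 < S.card)
      (hmax : ∀ j : Fin m,
        shrink (q j) S (restrict π S) / c j ≤ shrink (q i) S (restrict π S) / c i)
      (hch : ∀ a : A, (S.filter fun s => q i s = a).Nonempty →
        IsGreedy q c π (ch a) (S.filter fun s => q i s = a)) :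
      IsGreedy q c π (.node i ch) S

/-- `T` is an `ε`-approximate greedy query tree for `π` on version space `S`. -/
inductive IsApproxGreedy [Fintype A] [DecidableEq A] [DecidableEq H]
    (ε : ℝ) (q : Fin m → H → A) (c : Fin m → ℝ) (π : H → ℝ) :
    QTree m H A → Finset H → Prop
  | leaf (h : H) : IsApproxGreedy ε q c π (.leaf h) {h}
  | node (S : Finset H) (i : Fin m) (ch : A → QTree m H A)
      (hcard : 1 < S.card)
      (happrox : ∀ j : Fin m,
        (1 - ε) * (shrink (q j) S (restrict π S) / c j) ≤
          shrink (q i) S (restrict π S) / c i)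
      (hch : ∀ a : A, (S.filter fun s => q i s = a).Nonempty →
        IsApproxGreedy ε q c π (ch a) (S.filter fun s => q i s = a)) :
      IsApproxGreedy ε q c π (.node i ch) S

/-- `T` is irreducible on version space `S`: every asked question strictly splits the
surviving set. -/
inductive Irreducible [DecidableEq A] (q : Fin m → H → A) :
    QTree m H A → Finset H → Prop
  | leaf (h : H) (S : Finset H) : Irreducible q (.leaf h) S
  | node (S : Finset H) (i : Fin m) (ch : A → QTree m H A)
      (hsplit : ∃ s ∈ S, ∃ t ∈ S, q i s ≠ q i t)
      (hch : ∀ a : A, (S.filter fun s => q i s = a).Nonempty →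
        Irreducible q (ch a) (S.filter fun s => q i s = a)) :
      Irreducible q (.node i ch) S

/- Both bounds are statements about the answer distribution `p` of the question under `π_S`:
`Δ_i(S, π_S) = 1 - ∑ⱼ pⱼ²` and `δ_i · π_S(R) = 1 - p_a` with `a` the answer of `h_0`.
Dropping all squares but `p_a²` gives `1 - ∑ⱼ pⱼ² ≤ 1 - p_a² ≤ 2 (1 - p_a)`; bounding the other
squares by `(1 - p_a)²` gives `1 - ∑ⱼ pⱼ² ≥ 2 p_a (1 - p_a)`, which is `≥ 1 - p_a` once `p_a ≥ 1/2`. -/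

section GiniImpurity

variable [Fintype A] (p : A → ℝ) (a : A)

theorem one_sub_sum_sq_le_two_mul_one_sub : 1 - ∑ j, p j ^ 2 ≤ 2 * (1 - p a) := by
  have hsq : p a ^ 2 ≤ ∑ j, p j ^ 2 :=
    single_le_sum (f := fun j => p j ^ 2) (fun j _ => sq_nonneg (p j)) (mem_univ a)
  nlinarith [sq_nonneg (1 - p a)]

theorem one_sub_le_one_sub_sum_sq [DecidableEq A] (hp : ∀ j, 0 ≤ p j) (hsum : ∑ j, p j = 1)
    (ha : 1 / 2 ≤ p a) : 1 - p a ≤ 1 - ∑ j, p j ^ 2 := by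
  have hrest : ∑ j ∈ univ.erase a, p j = 1 - p a := by
    rw [← hsum, ← add_sum_erase _ p (mem_univ a), add_sub_cancel_left]
  have hrest_nonneg : 0 ≤ 1 - p a := hrest ▸ sum_nonneg fun j _ => hp j
  have hrest_sq : ∑ j ∈ univ.erase a, p j ^ 2 ≤ (1 - p a) ^ 2 :=
    hrest ▸ sum_sq_le_sq_sum_of_nonneg fun j _ => hp j
  rw [← add_sum_erase _ _ (mem_univ a)]
  nlinarith [mul_nonneg hrest_nonneg (by linarith : (0 : ℝ) ≤ 2 * p a - 1)]

end GiniImpurity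

section Restrict

variable {v : H → ℝ} {S T U : Finset H}

theorem mass_nonneg (hv : ∀ h, 0 ≤ v h) (S : Finset H) : 0 ≤ mass v S :=
  sum_nonneg fun h _ => hv h

theorem mass_mono (hv : ∀ h, 0 ≤ v h) (hUT : U ⊆ T) : mass v U ≤ mass v T :=
  sum_le_sum_of_subset_of_nonneg hUT fun h _ _ => hv h

variable [DecidableEq H]

theorem restrict_nonneg (hv : ∀ h, 0 ≤ v h) (S : Finset H) (h : H) : 0 ≤ restrict v S h := by
  unfold restrict
  split_ifs
  exacts [div_nonneg (hv h) (mass_nonneg hv S), le_rfl]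

theorem mass_restrict (hUT : U ⊆ T) : mass (restrict v T) U = mass v U / mass v T := by
  rw [mass, mass, sum_div]
  exact sum_congr rfl fun h hh => if_pos (hUT hh)

theorem mass_restrict_self (hS : mass v S ≠ 0) : mass (restrict v S) S = 1 := by
  rw [mass_restrict subset_rfl, div_self hS]

theorem mass_restrict_mul_mass_restrict (hv : ∀ h, 0 ≤ v h) (hUT : U ⊆ T) (hTS : T ⊆ S) :
    mass (restrict v T) U * mass (restrict v S) T = mass (restrict v S) U := by
  rw [mass_restrict hUT, mass_restrict hTS, mass_restrict (hUT.trans hTS)]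
  by_cases hT : mass v T = 0
  -- `π_T` is junk when `π(T) = 0`, but then `π(U) = 0` as well.
  · have hU : mass v U = 0 := le_antisymm (hT ▸ mass_mono hv hUT) (mass_nonneg hv U)
    simp [hT, hU]
  · field_simp

end Restrict

section Shrink

variable [DecidableEq A] {w : H → ℝ} {S : Finset H} (qi : H → A)

theorem shrink_eq_one_sub_sum_sq [Fintype A] (hw : mass w S = 1) :
    shrink qi S w = 1 - ∑ j, mass w (S.filter fun s => qi s = j) ^ 2 := by
  simp only [shrink, hw, div_one]

theorem sum_mass_filter_eq_one [Fintype A] (hw : mass w S = 1) :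
    ∑ j, mass w (S.filter fun s => qi s = j) = 1 :=
  (sum_fiberwise S qi w).trans hw

theorem mass_filter_ne_eq_one_sub (hw : mass w S = 1) (a : A) :
    mass w (S.filter fun s => qi s ≠ a) = 1 - mass w (S.filter fun s => qi s = a) := by
  rw [← hw, mass, mass, mass, ← sum_filter_add_sum_filter_not S (fun s => qi s = a) w]
  ring

end Shrink

theorem shrink_bounds_general [Fintype A] [DecidableEq H] [DecidableEq A]
    (π : H → ℝ) (hπpos : ∀ h, 0 < π h)
    (q : Fin m → H → A)
    (S : Finset H)
    (h0 : H) (h0S : h0 ∈ S) (hh0 : 1 / 2 < restrict π S h0)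
    (i : Fin m) :
    mass (restrict π (S.erase h0)) ((S.erase h0).filter fun r => q i r ≠ q i h0) *
        mass (restrict π S) (S.erase h0) ≤
      shrink (q i) S (restrict π S) ∧
    shrink (q i) S (restrict π S) ≤
      2 * (mass (restrict π (S.erase h0)) ((S.erase h0).filter fun r => q i r ≠ q i h0) *
        mass (restrict π S) (S.erase h0)) := by
  have hπ : ∀ h, 0 ≤ π h := fun h => (hπpos h).le
  have hw : ∀ h, 0 ≤ restrict π S h := restrict_nonneg hπ S
  have hw1 : mass (restrict π S) S = 1 :=
    mass_restrict_self (sum_pos (fun h _ => hπpos h) ⟨h0, h0S⟩).ne'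
  have hδ : mass (restrict π (S.erase h0)) ((S.erase h0).filter fun r => q i r ≠ q i h0) *
      mass (restrict π S) (S.erase h0) =
      1 - mass (restrict π S) (S.filter fun s => q i s = q i h0) := by
    rw [mass_restrict_mul_mass_restrict hπ (filter_subset _ _) (erase_subset h0 S), filter_erase,
      erase_eq_of_notMem (by simp), mass_filter_ne_eq_one_sub _ hw1]
  have hhalf : 1 / 2 ≤ mass (restrict π S) (S.filter fun s => q i s = q i h0) :=
    hh0.le.trans (single_le_sum (fun h _ => hw h) (mem_filter.2 ⟨h0S, rfl⟩))
  rw [hδ, shrink_eq_one_sub_sum_sq _ hw1]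
  exact ⟨one_sub_le_one_sub_sum_sq _ _ (fun j => mass_nonneg hw _)
    (sum_mass_filter_eq_one _ hw1) hhalf, one_sub_sum_sq_le_two_mul_one_sub _ _⟩

/-- If `h_0 ∈ S` has `π_S(h_0) > 1/2` and `R = S \ {h_0}`, then for every
question `q_i`, `δ_i · π_S(R) ≤ Δ_i(S, π_S) ≤ 2 · δ_i · π_S(R)`. -/
theorem shrink_bounds [Fintype H] [Fintype A] [DecidableEq H] [DecidableEq A]
    (π : H → ℝ) (hπpos : ∀ h, 0 < π h) (hπsum : ∑ h : H, π h = 1)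
    (hH : 1 < Fintype.card H)
    (q : Fin m → H → A)
    (S : Finset H) (hS : 1 < S.card)
    (h0 : H) (h0S : h0 ∈ S) (hh0 : 1 / 2 < restrict π S h0)
    (i : Fin m) :
    mass (restrict π (S.erase h0)) ((S.erase h0).filter fun r => q i r ≠ q i h0) *
        mass (restrict π S) (S.erase h0) ≤
      shrink (q i) S (restrict π S) ∧
    shrink (q i) S (restrict π S) ≤
      2 * (mass (restrict π (S.erase h0)) ((S.erase h0).filter fun r => q i r ≠ q i h0) *
        mass (restrict π S) (S.erase h0)) :=
  shrink_bounds_general π hπpos q S h0 h0S hh0 i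

end ActiveLearning
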